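/- Let k ≥ 2 be an integer and let G be a path P_n with n ≥ 2 or a cycle C_n with n ≥ 3. Then γ_{t[1,k]}(G) = n/2 if n ≡ 0 (mod 4), γ_{t[1,k]}(G) = (n+1)/2 if n ≡ 1 (mod 4), γ_{t[1,k]}(G) = (n+2)/2 if n ≡ 2 (mod 4), and γ_{t[1,k]}(G) = (n+1)/2 if n ≡ 3 (mod 4). -/

import Mathlib

/-!
Every vertex of `P_n` or `C_n` has degree at most `2 ≤ k`, so the upper bound in a total
`[1,k]`-set is automatic and `γ_{t[1,k]}` is the total domination number `γ_t`.
A vertex totally dominates at most two vertices, so `γ_t ≥ n / 2`. For even `n`, each parity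
class of `C_n` has `n / 2` vertices, all of whose neighbours lie in the other class; hence each
class of a total dominating set has at least `⌈n / 4⌉` vertices, which gives the extra vertex
when `n ≡ 2 (mod 4)`. As `P_n ≤ C_n`, these lower bounds hold for `P_n` as well, and pairs of
adjacent vertices `{4i + 1, 4i + 2}` attain them on `P_n`, hence on `C_n`:
`γ_t = ⌊n/2⌋ + ⌈n/4⌉ - ⌊n/4⌋`.
-/

open SimpleGraph

/-- The lexicographic product of two simple graphs. -/
def SimpleGraph.lexProd {V W : Type*} (G : SimpleGraph V) (H : SimpleGraph W) :
    SimpleGraph (V × W) where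
  Adj p q := G.Adj p.1 q.1 ∨ (p.1 = q.1 ∧ H.Adj p.2 q.2)
  symm := by
    refine ⟨?_⟩
    rintro p q (h | ⟨e, h⟩)
    · exact Or.inl h.symm
    · exact Or.inr ⟨e.symm, h.symm⟩
  loopless := by
    refine ⟨?_⟩
    rintro p (h | ⟨_, h⟩)
    · exact G.loopless.irrefl _ h
    · exact H.loopless.irrefl _ h

/-- The `H`-layer of the product over a vertex `v` of `G`: all pairs with first
coordinate `v`. -/
def layer {V W : Type*} (v : V) : Set (V × W) := {p | p.1 = v}

/-- `S` is a `[1,k]`-set of `G`: every vertex outside `S` has at least `1` and at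
most `k` neighbors in `S`. -/
def IsOneK {V : Type*} (G : SimpleGraph V) (k : ℕ) (S : Set V) : Prop :=
  ∀ v ∉ S, 1 ≤ (G.neighborSet v ∩ S).ncard ∧ (G.neighborSet v ∩ S).ncard ≤ k

/-- `S` is a total `[1,k]`-set of `G`: every vertex has at least `1` and at most `k`
neighbors in `S`. -/
def IsTotalOneK {V : Type*} (G : SimpleGraph V) (k : ℕ) (S : Set V) : Prop :=
  ∀ v, 1 ≤ (G.neighborSet v ∩ S).ncard ∧ (G.neighborSet v ∩ S).ncard ≤ k

/-- `S` is an independent `[1,k]`-set of `G`. -/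
def IsIndepOneK {V : Type*} (G : SimpleGraph V) (k : ℕ) (S : Set V) : Prop :=
  IsOneK G k S ∧ ∀ v ∈ S, ∀ w ∈ S, ¬ G.Adj v w

/-- `S` is `j`-dependent: every vertex of `S` has at most `j` neighbors in `S`. -/
def IsJDep {V : Type*} (G : SimpleGraph V) (j : ℕ) (S : Set V) : Prop :=
  ∀ v ∈ S, (G.neighborSet v ∩ S).ncard ≤ j

/-- `S` is an efficient dominating set of `G`. -/
def IsEffDom {V : Type*} (G : SimpleGraph V) (S : Set V) : Prop :=
  (∀ v ∉ S, (G.neighborSet v ∩ S).ncard = 1) ∧ ∀ v ∈ S, (G.neighborSet v ∩ S).ncard = 0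

/-- Membership in `SD^j_{[1,k]}(G)`: a `j`-dependent `[1,k]`-set such that every
vertex of `S` with no neighbor in `S` is at distance at least `3` from every other
vertex of `S`. -/
def InSD {V : Type*} (G : SimpleGraph V) (k j : ℕ) (S : Set V) : Prop :=
  IsOneK G k S ∧ IsJDep G j S ∧
    ∀ v ∈ S, (G.neighborSet v ∩ S).ncard = 0 → ∀ v' ∈ S, v' ≠ v → 3 ≤ G.dist v v'

/-- The `[1,k]`-domination number `γ_{[1,k]}`. -/
noncomputable def gammaOneK {V : Type*} (G : SimpleGraph V) (k : ℕ) : ℕ :=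
  sInf {n | ∃ S : Set V, IsOneK G k S ∧ S.ncard = n}

/-- The total `[1,k]`-domination number `γ_{t[1,k]}`. -/
noncomputable def gammaTotalOneK {V : Type*} (G : SimpleGraph V) (k : ℕ) : ℕ :=
  sInf {n | ∃ S : Set V, IsTotalOneK G k S ∧ S.ncard = n}

/-- The `[1,k]`-independence number `γ_{i[1,k]}`. -/
noncomputable def gammaIndepOneK {V : Type*} (G : SimpleGraph V) (k : ℕ) : ℕ :=
  sInf {n | ∃ S : Set V, IsIndepOneK G k S ∧ S.ncard = n}

/-- `D` is a dominating set of `G`. -/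
def IsDomSet {V : Type*} (G : SimpleGraph V) (D : Set V) : Prop :=
  ∀ v ∉ D, ∃ u ∈ D, G.Adj v u

/-- `D` is a total dominating set of `G`. -/
def IsTotalDomSet {V : Type*} (G : SimpleGraph V) (D : Set V) : Prop :=
  ∀ v, ∃ u ∈ D, G.Adj v u

/-- The domination number `γ`. -/
noncomputable def gammaDom {V : Type*} (G : SimpleGraph V) : ℕ :=
  sInf {n | ∃ D : Set V, IsDomSet G D ∧ D.ncard = n}

/-- The total domination number `γ_t`. -/
noncomputable def gammaTotalDom {V : Type*} (G : SimpleGraph V) : ℕ :=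
  sInf {n | ∃ D : Set V, IsTotalDomSet G D ∧ D.ncard = n}

open Finset

section TotalDomination

variable {V : Type*} {G : SimpleGraph V}

lemma isTotalOneK_iff_isTotalDomSet [G.LocallyFinite] {k : ℕ} (hk : ∀ v, G.degree v ≤ k)
    (S : Set V) : IsTotalOneK G k S ↔ IsTotalDomSet G S := by
  refine forall_congr' fun v => ?_
  have hfin : (G.neighborSet v).Finite := Set.toFinite _
  have hle : (G.neighborSet v ∩ S).ncard ≤ k :=
    calc (G.neighborSet v ∩ S).ncard ≤ (G.neighborSet v).ncard :=
          Set.ncard_inter_le_ncard_left _ _ hfin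
      _ = G.degree v := by rw [Set.ncard_eq_toFinset_card', ← card_neighborSet_eq_degree,
          Set.toFinset_card]
      _ ≤ k := hk v
  rw [Nat.one_le_iff_ne_zero, ← Nat.pos_iff_ne_zero, Set.ncard_pos (hfin.inter_of_left S)]
  simp only [hle, and_true, Set.Nonempty, Set.mem_inter_iff, mem_neighborSet]
  exact ⟨fun ⟨u, hadj, hu⟩ => ⟨u, hu, hadj⟩, fun ⟨u, hu, hadj⟩ => ⟨u, hadj, hu⟩⟩

lemma gammaTotalOneK_eq_gammaTotalDom [G.LocallyFinite] {k : ℕ} (hk : ∀ v, G.degree v ≤ k) :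
    gammaTotalOneK G k = gammaTotalDom G := by
  simp only [gammaTotalOneK, gammaTotalDom, isTotalOneK_iff_isTotalDomSet hk]

lemma gammaTotalDom_eq_of_le {r : ℕ} (hex : ∃ S, IsTotalDomSet G S ∧ S.ncard ≤ r)
    (hle : ∀ S, IsTotalDomSet G S → r ≤ S.ncard) : gammaTotalDom G = r := by
  obtain ⟨S, hS, hr⟩ := hex
  refine IsLeast.csInf_eq ⟨⟨S, hS, le_antisymm hr (hle S hS)⟩, ?_⟩
  rintro _ ⟨T, hT, rfl⟩
  exact hle T hT

lemma IsTotalDomSet.mono {H : SimpleGraph V} {S : Set V} (hS : IsTotalDomSet G S) (hGH : G ≤ H) :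
    IsTotalDomSet H S := fun v =>
  let ⟨u, hu, hadj⟩ := hS v
  ⟨u, hu, hGH hadj⟩

lemma card_le_mul_card_of_forall_exists_adj [G.LocallyFinite] [DecidableEq V] {d : ℕ}
    (hd : ∀ v, G.degree v ≤ d) {S T : Finset V} (hT : ∀ t ∈ T, ∃ s ∈ S, G.Adj t s) :
    #T ≤ d * #S :=
  calc #T ≤ #(S.biUnion fun s => G.neighborFinset s) := card_le_card fun t ht => by
        obtain ⟨s, hs, hadj⟩ := hT t ht
        exact mem_biUnion.2 ⟨s, hs, (mem_neighborFinset _ _ _).2 hadj.symm⟩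
    _ ≤ ∑ s ∈ S, G.degree s := card_biUnion_le
    _ ≤ ∑ _s ∈ S, d := sum_le_sum fun s _ => hd s
    _ = d * #S := by rw [sum_const, smul_eq_mul, mul_comm]

end TotalDomination

lemma Fin.card_filter_val_eq_count (n : ℕ) (p : ℕ → Prop) [DecidablePred p] :
    #{v : Fin n | p v} = n.count p := by
  rw [Nat.count_eq_card_filter_range, ← card_map Fin.valEmbedding]
  congr 1
  ext m
  simp only [mem_map, mem_filter, mem_univ, true_and, Fin.valEmbedding_apply, mem_range]
  exact ⟨fun ⟨v, hv, hvm⟩ => hvm ▸ ⟨v.isLt, hv⟩, fun ⟨hm, hp⟩ => ⟨⟨m, hm⟩, hp, rfl⟩⟩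

namespace SimpleGraph

lemma cycleGraph_degree_le_two {n : ℕ} (v : Fin n) : (cycleGraph n).degree v ≤ 2 := by
  match n, v with
  | 1, v => simp [cycleGraph_one_eq_bot]
  | n + 2, v => exact cycleGraph_degree_two_le.trans_le card_le_two

instance (n : ℕ) : DecidableRel (pathGraph n).Adj := fun _ _ => decidable_of_iff' _ pathGraph_adj

lemma pathGraph_degree_le_two {n : ℕ} (v : Fin n) : (pathGraph n).degree v ≤ 2 :=
  (degree_le_of_le pathGraph_le_cycleGraph).trans (cycleGraph_degree_le_two v)

lemma cycleGraph_adj_val_mod_two_ne {n : ℕ} (hn : Even n) {u v : Fin n}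
    (h : (cycleGraph n).Adj u v) : u.val % 2 ≠ v.val % 2 := by
  have : decide (u.val % 2 = 0) ≠ decide (v.val % 2 = 0) :=
    (cycleGraph.bicoloring_of_even n hn).valid h
  simp only [ne_eq, decide_eq_decide] at this
  omega

end SimpleGraph

lemma le_ncard_of_isTotalDomSet_cycleGraph {n : ℕ} {S : Set (Fin n)}
    (hS : IsTotalDomSet (cycleGraph n) S) : n / 2 + (n + 3) / 4 - n / 4 ≤ S.ncard := by
  rw [Set.ncard_eq_toFinset_card S]
  set T := (Set.toFinite S).toFinset
  have hdom : ∀ v, ∃ s ∈ T, (cycleGraph n).Adj v s := fun v => by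
    obtain ⟨s, hs, hadj⟩ := hS v
    exact ⟨s, (Set.toFinite S).mem_toFinset.2 hs, hadj⟩
  have hall : n ≤ 2 * #T := by
    simpa using card_le_mul_card_of_forall_exists_adj cycleGraph_degree_le_two
      (T := univ) fun v _ => hdom v
  rcases Nat.even_or_odd n with hn | hn
  · have hn2 : n % 2 = 0 := Nat.even_iff.1 hn
    have hclass : ∀ b < 2, n / 2 ≤ 2 * #{s ∈ T | s.val % 2 ≠ b} := by
      intro b hb
      have hcount : n.count (· % 2 = b) = n.count (· ≡ b [MOD 2]) := by
        congr; ext m; simp [Nat.ModEq, Nat.mod_eq_of_lt hb]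
      have hcard : #{v : Fin n | v.val % 2 = b} = n / 2 := by
        rw [Fin.card_filter_val_eq_count n (· % 2 = b), hcount, Nat.count_modEq_card _ two_pos]
        split_ifs <;> omega
      rw [← hcard]
      refine card_le_mul_card_of_forall_exists_adj cycleGraph_degree_le_two fun v hv => ?_
      obtain ⟨s, hs, hadj⟩ := hdom v
      refine ⟨s, mem_filter.2 ⟨hs, ?_⟩, hadj⟩
      have := cycleGraph_adj_val_mod_two_ne hn hadj
      have := (mem_filter.1 hv).2
      omega
    have hsplit := card_filter_add_card_filter_not (s := T) (fun s : Fin n => s.val % 2 ≠ 0)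
    have hodd : #{s ∈ T | ¬s.val % 2 ≠ 0} = #{s ∈ T | s.val % 2 ≠ 1} :=
      congrArg card (filter_congr fun s _ => by omega)
    have := hclass 0 two_pos
    have := hclass 1 one_lt_two
    omega
  · have := Nat.odd_iff.1 hn
    omega

lemma exists_isTotalDomSet_pathGraph {n : ℕ} (hn : 2 ≤ n) : ∃ S : Set (Fin n),
    IsTotalDomSet (pathGraph n) S ∧ S.ncard ≤ n / 2 + (n + 3) / 4 - n / 4 := by
  set r := n / 2 + (n + 3) / 4 - n / 4
  -- the pairs {4i + 1, 4i + 2} of adjacent vertices, the last pair shifted left to fit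
  let f : Fin r → Fin n := fun j => ⟨min (4 * (j.val / 2) + 1) (n - 2) + j.val % 2, by omega⟩
  refine ⟨↑(univ.image f), fun v => ?_, ?_⟩
  · obtain ⟨j, hj, hadj⟩ : ∃ j < r, min (4 * (j / 2) + 1) (n - 2) + j % 2 + 1 = v.val ∨
        v.val + 1 = min (4 * (j / 2) + 1) (n - 2) + j % 2 := by
      have := v.isLt
      by_contra! h
      have := h (2 * (v.val / 4))
      have := h (2 * (v.val / 4) + 1)
      omega
    exact ⟨f ⟨j, hj⟩, by simp, pathGraph_adj.2 hadj.symm⟩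
  · rw [Set.ncard_coe_finset]
    exact card_image_le.trans (card_univ.trans (Fintype.card_fin r)).le

lemma gammaTotalDom_pathGraph {n : ℕ} (hn : 2 ≤ n) :
    gammaTotalDom (pathGraph n) = n / 2 + (n + 3) / 4 - n / 4 :=
  gammaTotalDom_eq_of_le (exists_isTotalDomSet_pathGraph hn) fun _ hS =>
    le_ncard_of_isTotalDomSet_cycleGraph (hS.mono pathGraph_le_cycleGraph)

lemma gammaTotalDom_cycleGraph {n : ℕ} (hn : 2 ≤ n) :
    gammaTotalDom (cycleGraph n) = n / 2 + (n + 3) / 4 - n / 4 := by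
  obtain ⟨S, hS, hcard⟩ := exists_isTotalDomSet_pathGraph hn
  exact gammaTotalDom_eq_of_le ⟨S, hS.mono pathGraph_le_cycleGraph, hcard⟩ fun _ =>
    le_ncard_of_isTotalDomSet_cycleGraph

/-- For `k ≥ 2`, the total `[1,k]`-domination number of the path `P_n`
(`n ≥ 2`) and of the cycle `C_n` (`n ≥ 3`) is `n/2`, `(n+1)/2`, `(n+2)/2`, `(n+1)/2`
according as `n ≡ 0, 1, 2, 3 (mod 4)`. -/
theorem stmt3 (k : ℕ) (hk : 2 ≤ k) :
    (∀ n : ℕ, 2 ≤ n →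
      gammaTotalOneK (SimpleGraph.pathGraph n) k =
        (if n % 4 = 0 then n / 2 else if n % 4 = 2 then (n + 2) / 2 else (n + 1) / 2)) ∧
    (∀ n : ℕ, 3 ≤ n →
      gammaTotalOneK (SimpleGraph.cycleGraph n) k =
        (if n % 4 = 0 then n / 2 else if n % 4 = 2 then (n + 2) / 2 else (n + 1) / 2)) := by
  have hformula (n : ℕ) : n / 2 + (n + 3) / 4 - n / 4 =
      if n % 4 = 0 then n / 2 else if n % 4 = 2 then (n + 2) / 2 else (n + 1) / 2 := by
    split_ifs <;> omega
  refine ⟨fun n hn => ?_, fun n hn => ?_⟩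
  · rw [gammaTotalOneK_eq_gammaTotalDom fun v => (pathGraph_degree_le_two v).trans hk,
      gammaTotalDom_pathGraph hn, hformula]
  · rw [gammaTotalOneK_eq_gammaTotalDom fun v => (cycleGraph_degree_le_two v).trans hk,
      gammaTotalDom_cycleGraph (by omega), hformula]
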